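/- Let t ≤ T be natural numbers, and for k = t,…,T let I_k > 0 be weights and C_k, V_k : ℝ → ℝ be differentiable with C_k'(α*) > 0 at a fixed point α*. Let λ̃ = (Σ_k I_k V_k'(α*)) / (Σ_k I_k C_k'(α*)). Suppose each h_k(α) := V_k(α) - λ̃·C_k(α) is γ-strongly concave for some γ > 0, and let C'_max ≥ C_k'(α*) for all k. Define σ² = (1/Σ_k I_k) · Σ_k I_k · (V_k'(α*)/C_k'(α*) - λ̃)². Then Σ_k I_k·(sup_α h_k(α) - h_k(α*)) ≤ (C'_max² · Σ_k I_k) / (2γ) · σ². -/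

import Mathlib

open Set

/-- Tangent line bound for a concave differentiable function on univ. -/
lemma tangent_bound {f : ℝ → ℝ} (hc : ConcaveOn ℝ Set.univ f)
    (hd : Differentiable ℝ f) (a x : ℝ) :
    f x ≤ f a + deriv f a * (x - a) := by
  rcases lt_trichotomy x a with h | rfl | h
  · have := hc.deriv_le_slope (mem_univ x) (mem_univ a) h (hd a)
    rw [slope_def_field] at this
    have hxa : x - a < 0 := by linarith
    rw [le_div_iff₀ (by linarith : (0:ℝ) < a - x)] at this
    nlinarith
  · simp
  · have := hc.slope_le_deriv (mem_univ a) (mem_univ x) h (hd a)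
    rw [slope_def_field] at this
    rw [div_le_iff₀ (by linarith : (0:ℝ) < x - a)] at this
    linarith

/-- Strong concavity quadratic gap bound. -/
lemma strong_conc_gap {h : ℝ → ℝ} {γ : ℝ} (hγ : 0 < γ)
    (hc : ConcaveOn ℝ Set.univ (fun α => h α + γ / 2 * α ^ 2))
    (hd : Differentiable ℝ h) (a : ℝ) :
    (⨆ α, h α) - h a ≤ (deriv h a) ^ 2 / (2 * γ) := by
  set f : ℝ → ℝ := fun α => h α + γ / 2 * α ^ 2 with hf
  have hfd : Differentiable ℝ f := hd.add (by fun_prop)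
  have hderiv : ∀ b : ℝ, deriv f b = deriv h b + γ * b := by
    intro b
    have : HasDerivAt f (deriv h b + γ / 2 * (2 * b)) b := by
      exact ((hd b).hasDerivAt).add (((hasDerivAt_pow 2 b).const_mul (γ/2)).congr_deriv (by ring))
    rw [this.deriv]; ring
  have key : ∀ x : ℝ, h x ≤ h a + (deriv h a) ^ 2 / (2 * γ) := by
    intro x
    have hb := tangent_bound hc hfd a x
    rw [hderiv a] at hb
    simp only [hf] at hb
    -- h x + γ/2 x² ≤ h a + γ/2 a² + (h' a + γ a)(x - a)
    have hdiv : (deriv h a) ^ 2 = (deriv h a) ^ 2 / (2 * γ) * (2 * γ) := by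
      field_simp
    nlinarith [sq_nonneg (γ * (x - a) - deriv h a)]
  have hsup : (⨆ α, h α) ≤ h a + (deriv h a) ^ 2 / (2 * γ) := ciSup_le key
  linarith

/-- Core inequality of the structural gap theorem: the traffic-weighted sum of
per-tick Lagrangian suboptimalities at `α*` is bounded by the efficiency
dispersion `σ²`. -/
theorem stmt5 (t T : ℕ) (htT : t ≤ T) (I : ℕ → ℝ) (C V : ℕ → ℝ → ℝ)
    (αs γ Cmax : ℝ) (hγ : 0 < γ)
    (hI : ∀ k ∈ Finset.Icc t T, 0 < I k)
    (hCd : ∀ k ∈ Finset.Icc t T, DifferentiableAt ℝ (C k) αs)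
    (hVd : ∀ k ∈ Finset.Icc t T, DifferentiableAt ℝ (V k) αs)
    (hC' : ∀ k ∈ Finset.Icc t T, 0 < deriv (C k) αs)
    (lam : ℝ)
    (hlam : lam = (∑ k ∈ Finset.Icc t T, I k * deriv (V k) αs) /
      (∑ k ∈ Finset.Icc t T, I k * deriv (C k) αs))
    (hconc : ∀ k ∈ Finset.Icc t T,
      ConcaveOn ℝ Set.univ (fun α => (V k α - lam * C k α) + γ / 2 * α ^ 2))
    (hdiffh : ∀ k ∈ Finset.Icc t T, Differentiable ℝ (fun α => V k α - lam * C k α))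
    (hCmax : ∀ k ∈ Finset.Icc t T, deriv (C k) αs ≤ Cmax)
    (σ2 : ℝ)
    (hσ : σ2 = (∑ k ∈ Finset.Icc t T,
        I k * (deriv (V k) αs / deriv (C k) αs - lam) ^ 2) /
      (∑ k ∈ Finset.Icc t T, I k)) :
    ∑ k ∈ Finset.Icc t T,
        I k * ((⨆ α, (V k α - lam * C k α)) - (V k αs - lam * C k αs))
      ≤ Cmax ^ 2 * (∑ k ∈ Finset.Icc t T, I k) / (2 * γ) * σ2 := by
  have hS : 0 < ∑ k ∈ Finset.Icc t T, I k :=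
    Finset.sum_pos hI ⟨t, Finset.mem_Icc.mpr ⟨le_refl t, htT⟩⟩
  have key : ∀ k ∈ Finset.Icc t T,
      I k * ((⨆ α, (V k α - lam * C k α)) - (V k αs - lam * C k αs))
        ≤ I k * (Cmax ^ 2 * (deriv (V k) αs / deriv (C k) αs - lam) ^ 2 / (2 * γ)) := by
    intro k hk
    have hCk := hC' k hk
    have hCk' : deriv (C k) αs ≠ 0 := ne_of_gt hCk
    have hd : deriv (fun α => V k α - lam * C k α) αs
        = deriv (V k) αs - lam * deriv (C k) αs :=
      (((hVd k hk).hasDerivAt).sub (((hCd k hk).hasDerivAt).const_mul lam)).deriv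
    have hgap := strong_conc_gap hγ (hconc k hk) (hdiffh k hk) αs
    rw [hd] at hgap
    have heq : deriv (V k) αs - lam * deriv (C k) αs
        = deriv (C k) αs * (deriv (V k) αs / deriv (C k) αs - lam) := by
      field_simp
    have hsq : (deriv (V k) αs - lam * deriv (C k) αs) ^ 2
        ≤ Cmax ^ 2 * (deriv (V k) αs / deriv (C k) αs - lam) ^ 2 := by
      rw [heq, mul_pow]
      exact mul_le_mul_of_nonneg_right
        (pow_le_pow_left₀ (le_of_lt hCk) (hCmax k hk) 2) (sq_nonneg _)
    have h2 : ((⨆ α, (V k α - lam * C k α)) - (V k αs - lam * C k αs))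
        ≤ Cmax ^ 2 * (deriv (V k) αs / deriv (C k) αs - lam) ^ 2 / (2 * γ) := by
      refine hgap.trans ?_
      gcongr
    exact mul_le_mul_of_nonneg_left h2 (le_of_lt (hI k hk))
  refine (Finset.sum_le_sum key).trans (le_of_eq ?_)
  rw [hσ]
  have h1 : ∑ k ∈ Finset.Icc t T,
      I k * (Cmax ^ 2 * (deriv (V k) αs / deriv (C k) αs - lam) ^ 2 / (2 * γ))
      = Cmax ^ 2 / (2 * γ) * ∑ k ∈ Finset.Icc t T,
        I k * (deriv (V k) αs / deriv (C k) αs - lam) ^ 2 := by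
    rw [Finset.mul_sum]
    exact Finset.sum_congr rfl fun k _ => by ring
  rw [h1]
  field_simp
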